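/- Along the projected primal-dual gradient flow of the augmented Lagrangian, the Lyapunov function d(x,v) = (1/2)(‖x - x*‖² + ‖v - v*‖²) has nonpositive derivative: for all x ∈ K, v ∈ ℝᵐ, ⟨x - x*, Π_K(x, -∇f(x) - Aᵀv - Aᵀ(Ax-b))⟩ + ⟨v - v*, Ax - b⟩ ≤ -‖Ax - b‖² ≤ 0, where (x*, v*) is a saddle point of the Lagrangian L(x,v) = f(x) + vᵀ(Ax-b). -/

import Mathlib

open scoped RealInnerProductSpace

/-! The projection `p` of `w = -∇f(x) - Aᵀv - Aᵀ(Ax - b)` onto the closed convex cone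
`T_K(x)` satisfies `⟪w - p, u⟫ ≤ 0` for every `u ∈ T_K(x)`; taking `u = x* - x` gives
`⟪x - x*, p⟫ ≤ ⟪x - x*, w⟫`. Since `A x* = b`, expanding `w` gives
`⟪x - x*, w⟫ = -⟪∇f(x), x - x*⟫ - ⟪v, A x - b⟫ - ‖A x - b‖²`, and the gradient inequality
`f x + ⟪∇f(x), x* - x⟫ ≤ f x*` together with the saddle inequality `L(x*, v*) ≤ L(x, v*)`
bounds `-⟪∇f(x), x - x*⟫` by `⟪v*, A x - b⟫`. -/

theorem ConvexOn.add_fderiv_sub_le {E : Type*} [NormedAddCommGroup E] [NormedSpace ℝ E]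
    {s : Set E} {f : E → ℝ} {f' : E →L[ℝ] ℝ} {x y : E} (hf : ConvexOn ℝ s f) (hx : x ∈ s)
    (hy : y ∈ s) (hf' : HasFDerivAt f f' x) : f x + f' (y - x) ≤ f y := by
  have hline : ConvexOn ℝ (AffineMap.lineMap (k := ℝ) x y ⁻¹' s)
      (f ∘ AffineMap.lineMap (k := ℝ) x y) :=
    hf.comp_affineMap _
  have hderiv : HasDerivAt (f ∘ AffineMap.lineMap (k := ℝ) x y) (f' (y - x)) 0 := by
    refine HasFDerivAt.comp_hasDerivAt (0 : ℝ) ?_ AffineMap.hasDerivAt_lineMap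
    simpa using hf'
  have := hline.le_slope_of_hasDerivAt (x := 0) (y := 1) (by simpa using hx) (by simpa using hy)
    zero_lt_one hderiv
  simp only [slope_def_field, Function.comp_apply, AffineMap.lineMap_apply_one,
    AffineMap.lineMap_apply_zero, sub_zero, div_one] at this
  linarith

section InnerProductSpace

variable {E : Type*} [NormedAddCommGroup E] [InnerProductSpace ℝ E]

theorem ConvexOn.add_inner_gradient_sub_le [CompleteSpace E] {s : Set E} {f : E → ℝ} {g x y : E}
    (hf : ConvexOn ℝ s f) (hx : x ∈ s) (hy : y ∈ s) (hg : HasGradientAt f g x) :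
    f x + ⟪g, y - x⟫ ≤ f y := by
  simpa using hf.add_fderiv_sub_le hx hy hg.hasFDerivAt

theorem Convex.inner_sub_sub_nonpos_of_forall_norm_sub_le {K : Set E} (hK : Convex ℝ K)
    {w p : E} (hp : p ∈ K) (hmin : ∀ u ∈ K, ‖w - p‖ ≤ ‖w - u‖) :
    ∀ u ∈ K, ⟪w - p, u - p⟫ ≤ 0 := by
  have : Nonempty K := ⟨⟨p, hp⟩⟩
  refine (norm_eq_iInf_iff_real_inner_le_zero hK hp).mp (le_antisymm ?_ ?_)
  · exact le_ciInf fun u => hmin u u.2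
  · have hbdd : BddBelow (Set.range fun u : K => ‖w - u‖) :=
      ⟨0, by rintro _ ⟨u, rfl⟩; exact norm_nonneg _⟩
    exact ciInf_le hbdd ⟨p, hp⟩

theorem ConvexCone.inner_sub_nonpos_of_forall_norm_sub_le (C : ConvexCone ℝ E) {w p u : E}
    (hp : p ∈ C) (hmin : ∀ u ∈ C, ‖w - p‖ ≤ ‖w - u‖) (hu : u ∈ C) : ⟪w - p, u⟫ ≤ 0 := by
  have hvar := C.convex.inner_sub_sub_nonpos_of_forall_norm_sub_le hp hmin
  -- testing at `2 • p ∈ C` shows `⟪w - p, p⟫ ≤ 0`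
  have hp2 : ⟪w - p, (2 : ℝ) • p - p⟫ ≤ 0 := hvar _ (C.smul_mem two_pos hp)
  have hu' : ⟪w - p, u - p⟫ ≤ 0 := hvar u hu
  rw [two_smul, add_sub_cancel_right] at hp2
  rw [inner_sub_right] at hu'
  linarith

/-- For `x ∈ K`, the closure of this cone is the tangent cone `T_K(x)`. -/
def Convex.feasibleDirections {K : Set E} (hK : Convex ℝ K) (x : E) : ConvexCone ℝ E where
  carrier := {d | ∃ y ∈ K, ∃ l : ℝ, 0 ≤ l ∧ d = l • (y - x)}
  smul_mem' := by
    rintro c hc _ ⟨y, hy, l, hl, rfl⟩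
    exact ⟨y, hy, c * l, mul_nonneg hc.le hl, smul_smul c l (y - x)⟩
  add_mem' := by
    rintro _ ⟨y₁, hy₁, l₁, hl₁, rfl⟩ _ ⟨y₂, hy₂, l₂, hl₂, rfl⟩
    rcases (add_nonneg hl₁ hl₂).eq_or_lt with hsum | hsum
    · obtain ⟨rfl, rfl⟩ : l₁ = 0 ∧ l₂ = 0 := ⟨by linarith, by linarith⟩
      exact ⟨y₁, hy₁, 0, le_rfl, by simp⟩
    -- `l₁ (y₁ - x) + l₂ (y₂ - x) = (l₁ + l₂) (y - x)` for the convex combination `y` of `y₁, y₂`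
    refine ⟨(l₁ / (l₁ + l₂)) • y₁ + (l₂ / (l₁ + l₂)) • y₂,
      hK hy₁ hy₂ (by positivity) (by positivity) (by field_simp), l₁ + l₂, hsum.le, ?_⟩
    match_scalars <;> field_simp
    ring

theorem Convex.sub_mem_feasibleDirections {K : Set E} (hK : Convex ℝ K) {x y : E} (hy : y ∈ K) :
    y - x ∈ hK.feasibleDirections x :=
  ⟨y, hy, 1, zero_le_one, (one_smul ℝ _).symm⟩

end InnerProductSpace

theorem lyapunov_derivative_nonpos_general (n m : ℕ)
    (K : Set (EuclideanSpace ℝ (Fin n))) (hK : Convex ℝ K)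
    (f : EuclideanSpace ℝ (Fin n) → ℝ) (hf : ConvexOn ℝ Set.univ f)
    (g : EuclideanSpace ℝ (Fin n) → EuclideanSpace ℝ (Fin n))
    (hg : ∀ x, HasGradientAt f (g x) x)
    (A : EuclideanSpace ℝ (Fin n) →L[ℝ] EuclideanSpace ℝ (Fin m))
    (b : EuclideanSpace ℝ (Fin m))
    (L : EuclideanSpace ℝ (Fin n) → EuclideanSpace ℝ (Fin m) → ℝ)
    (hL : ∀ x v, L x v = f x + ⟪v, A x - b⟫)
    (xs : EuclideanSpace ℝ (Fin n)) (vs : EuclideanSpace ℝ (Fin m)) (hxs : xs ∈ K)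
    (hfeas : A xs = b)
    (hsaddle : ∀ x ∈ K, ∀ v, L xs v ≤ L xs vs ∧ L xs vs ≤ L x vs) :
    ∀ x ∈ K, ∀ v : EuclideanSpace ℝ (Fin m), ∀ p : EuclideanSpace ℝ (Fin n),
      -- `p` is the metric projection of the (augmented) negative gradient onto `T_K(x)`
      p ∈ closure {d | ∃ y ∈ K, ∃ l : ℝ, 0 ≤ l ∧ d = l • (y - x)} →
      (∀ u ∈ closure {d | ∃ y ∈ K, ∃ l : ℝ, 0 ≤ l ∧ d = l • (y - x)},
        ‖(-(g x) - ContinuousLinearMap.adjoint A v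
            - ContinuousLinearMap.adjoint A (A x - b)) - p‖ ≤
          ‖(-(g x) - ContinuousLinearMap.adjoint A v
            - ContinuousLinearMap.adjoint A (A x - b)) - u‖) →
      ⟪x - xs, p⟫ + ⟪v - vs, A x - b⟫ ≤ -‖A x - b‖ ^ 2 ∧ -‖A x - b‖ ^ 2 ≤ 0 := by
  intro x hx v p hp hmin
  set w := -(g x) - ContinuousLinearMap.adjoint A v - ContinuousLinearMap.adjoint A (A x - b)
  have hproj : ⟪w - p, xs - x⟫ ≤ 0 :=
    (hK.feasibleDirections x).closure.inner_sub_nonpos_of_forall_norm_sub_le hp hmin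
      (subset_closure (hK.sub_mem_feasibleDirections hxs))
  have hgrad := hf.add_inner_gradient_sub_le (Set.mem_univ x) (Set.mem_univ xs) (hg x)
  have hLag : f xs ≤ f x + ⟪vs, A x - b⟫ := by
    simpa [hL, hfeas] using (hsaddle x hx v).2
  have hres : A (x - xs) = A x - b := by rw [map_sub, hfeas]
  have hw : ⟪w, x - xs⟫ = -⟪g x, x - xs⟫ - ⟪v, A x - b⟫ - ‖A x - b‖ ^ 2 := by
    simp only [w, inner_sub_left, inner_neg_left, ContinuousLinearMap.adjoint_inner_left, hres]
    rw [← inner_sub_left, real_inner_self_eq_norm_sq]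
  rw [← neg_sub x xs, inner_neg_right, inner_sub_left] at hproj
  rw [← neg_sub x xs, inner_neg_right] at hgrad
  rw [real_inner_comm, inner_sub_left]
  constructor
  · linarith
  · exact neg_nonpos.mpr (sq_nonneg _)

/-- Along the projected primal–dual gradient flow of the augmented Lagrangian, the
Lyapunov function `d = (1/2)(‖x - x*‖² + ‖v - v*‖²)` decreases: for all `x ∈ K`, `v`,
`⟨x - x*, Π_K(x, -∇f(x) - Aᵀv - Aᵀ(Ax - b))⟩ + ⟨v - v*, Ax - b⟩ ≤ -‖Ax - b‖² ≤ 0`,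
where `(x*, v*)` is a saddle point of `L(x,v) = f(x) + ⟨v, Ax - b⟩`. -/
theorem lyapunov_derivative_nonpos (n m : ℕ)
    (K : Set (EuclideanSpace ℝ (Fin n))) (hKc : IsClosed K) (hK : Convex ℝ K)
    (f : EuclideanSpace ℝ (Fin n) → ℝ) (hf : ConvexOn ℝ Set.univ f)
    (g : EuclideanSpace ℝ (Fin n) → EuclideanSpace ℝ (Fin n))
    (hg : ∀ x, HasGradientAt f (g x) x)
    (A : EuclideanSpace ℝ (Fin n) →L[ℝ] EuclideanSpace ℝ (Fin m))
    (b : EuclideanSpace ℝ (Fin m))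
    (L : EuclideanSpace ℝ (Fin n) → EuclideanSpace ℝ (Fin m) → ℝ)
    (hL : ∀ x v, L x v = f x + ⟪v, A x - b⟫)
    (xs : EuclideanSpace ℝ (Fin n)) (vs : EuclideanSpace ℝ (Fin m)) (hxs : xs ∈ K)
    (hfeas : A xs = b)
    (hsaddle : ∀ x ∈ K, ∀ v, L xs v ≤ L xs vs ∧ L xs vs ≤ L x vs) :
    ∀ x ∈ K, ∀ v : EuclideanSpace ℝ (Fin m), ∀ p : EuclideanSpace ℝ (Fin n),
      -- `p` is the metric projection of the (augmented) negative gradient onto `T_K(x)`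
      p ∈ closure {d | ∃ y ∈ K, ∃ l : ℝ, 0 ≤ l ∧ d = l • (y - x)} →
      (∀ u ∈ closure {d | ∃ y ∈ K, ∃ l : ℝ, 0 ≤ l ∧ d = l • (y - x)},
        ‖(-(g x) - ContinuousLinearMap.adjoint A v
            - ContinuousLinearMap.adjoint A (A x - b)) - p‖ ≤
          ‖(-(g x) - ContinuousLinearMap.adjoint A v
            - ContinuousLinearMap.adjoint A (A x - b)) - u‖) →
      ⟪x - xs, p⟫ + ⟪v - vs, A x - b⟫ ≤ -‖A x - b‖ ^ 2 ∧ -‖A x - b‖ ^ 2 ≤ 0 :=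
  lyapunov_derivative_nonpos_general n m K hK f hf g hg A b L hL xs vs hxs hfeas hsaddle
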